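/- arXiv:2310.10939 — 3 statements merged into one kernel-verified Lean document; each statement's English description precedes it below -/
import Mathlib

section
/- Let M ∈ ℝⁿˣⁿ be symmetric with eigenvalues 1 ≥ γ₁ ≥ … ≥ γₙ ≥ 0 and orthonormal eigenvectors f₁,…,fₙ. Fix k ≤ n, ε ∈ (0,1], and suppose γ_{k+1} ≤ c₁ < 1 and γ_k ≥ 1 − c₂·ε·(log(24n/(ε²k)))⁻¹, where c₃ = 1/(2 log(1/c₁)) and c₂ = 1/(2√6·c₃). Let x₀ ∈ ℝⁿ satisfy ‖Px₀‖₂ ≤ √(6k) and ‖x₀‖₂ ≤ √(6n), where P = Σ_{i≤k} fᵢfᵢᵀ. Then for t = c₃·log(24n/(ε²k)), the vector x_t = Mᵗx₀ satisfies ‖x_t − Px₀‖₂ ≤ ε√k. -/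
open Matrix Finset

noncomputable def norm2 {n : ℕ} (v : Fin n → ℝ) : ℝ := Real.sqrt (∑ i, v i ^ 2)

lemma sqrt_add_le_aux (x y : ℝ) (hx : 0 ≤ x) (hy : 0 ≤ y) :
    Real.sqrt (x + y) ≤ Real.sqrt x + Real.sqrt y := by
  have h := Real.sqrt_le_sqrt (show x + y ≤ (Real.sqrt x + Real.sqrt y) ^ 2 by
    nlinarith [Real.sq_sqrt hx, Real.sq_sqrt hy, Real.sqrt_nonneg x, Real.sqrt_nonneg y])
  rwa [Real.sqrt_sq (by positivity)] at h

/-- orthonormality of the rows gives orthonormality of the columns -/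
lemma orth_cols {n : ℕ} (f : Fin n → (Fin n → ℝ))
    (horth : ∀ i j : Fin n, ∑ u, f i u * f j u = if i = j then 1 else 0) :
    ∀ u v : Fin n, ∑ j, f j u * f j v = if u = v then 1 else 0 := by
  set F : Matrix (Fin n) (Fin n) ℝ := Matrix.of f with hF
  have h1 : F * Fᵀ = 1 := by
    ext i j
    simp [Matrix.mul_apply, hF, horth i j, Matrix.one_apply]
  have h2 : Fᵀ * F = 1 := mul_eq_one_comm.mp h1
  intro u v
  have := congrFun (congrFun h2 u) v
  simpa [Matrix.mul_apply, hF, Matrix.one_apply] using this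

/-- expansion of the squared norm of a linear combination of orthonormal vectors -/
lemma norm_expand {n : ℕ} (f : Fin n → (Fin n → ℝ))
    (horth : ∀ i j : Fin n, ∑ u, f i u * f j u = if i = j then 1 else 0)
    (c : Fin n → ℝ) : ∑ u, (∑ j, c j * f j u) ^ 2 = ∑ j, c j ^ 2 := by
  have h1 : ∀ u : Fin n, (∑ j, c j * f j u) ^ 2
      = ∑ j, ∑ j', (c j * c j') * (f j u * f j' u) := by
    intro u
    rw [sq, Finset.sum_mul_sum]
    refine Finset.sum_congr rfl fun j _ => Finset.sum_congr rfl fun j' _ => by ring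
  simp_rw [h1]
  rw [Finset.sum_comm]
  refine Finset.sum_congr rfl fun j _ => ?_
  rw [Finset.sum_comm]
  have h2 : ∀ j' : Fin n, ∑ u, (c j * c j') * (f j u * f j' u)
      = (c j * c j') * if j = j' then 1 else 0 := by
    intro j'
    rw [← Finset.mul_sum, horth j j']
  simp_rw [h2]
  simp [sq]

set_option maxHeartbeats 1000000 in
/-- Power method guarantee: under the eigenvalue gap conditions
`γ_{k+1} ≤ c₁ < 1` and `γ_k ≥ 1 − c₂ ε (log(24n/(ε²k)))⁻¹`, with
`c₃ = 1/(2 log(1/c₁))`, `c₂ = 1/(2√6 c₃)`, if `‖P x₀‖₂ ≤ √(6k)` and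
`‖x₀‖₂ ≤ √(6n)`, then for `t = c₃ log(24n/(ε²k))` the vector `x_t = Mᵗ x₀`
satisfies `‖x_t − P x₀‖₂ ≤ ε √k`. -/
theorem stmt_2 {n : ℕ} (M : Matrix (Fin n) (Fin n) ℝ) (hM : M.IsSymm)
    (γ : Fin n → ℝ) (f : Fin n → (Fin n → ℝ))
    (heig : ∀ j, M.mulVec (f j) = γ j • f j)
    (horth : ∀ i j : Fin n, ∑ u, f i u * f j u = if i = j then 1 else 0)
    (hmono : ∀ i j : Fin n, i ≤ j → γ j ≤ γ i)
    (hγ1 : ∀ j, γ j ≤ 1) (hγ0 : ∀ j, 0 ≤ γ j)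
    (k : ℕ) (hk : 0 < k) (hkn : k < n)
    (ε : ℝ) (hε : 0 < ε) (hε1 : ε ≤ 1)
    (c₁ c₂ c₃ : ℝ) (hc₁0 : 0 < c₁) (hc₁1 : c₁ < 1)
    (hc₃ : c₃ = 1 / (2 * Real.log (1 / c₁)))
    (hc₂ : c₂ = 1 / (2 * Real.sqrt 6 * c₃))
    (hγk1 : γ ⟨k, hkn⟩ ≤ c₁)
    (hγk : 1 - c₂ * ε * (Real.log (24 * n / (ε ^ 2 * k)))⁻¹ ≤
      γ ⟨k - 1, lt_trans (Nat.pred_lt hk.ne') hkn⟩)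
    (x₀ : Fin n → ℝ) (Px₀ : Fin n → ℝ)
    (hP : Px₀ = ∑ j ∈ univ.filter (fun j : Fin n => (j : ℕ) < k),
      (∑ u, x₀ u * f j u) • f j)
    (hPx : norm2 Px₀ ≤ Real.sqrt (6 * k))
    (hx : norm2 x₀ ≤ Real.sqrt (6 * n))
    (t : ℕ) (ht : (t : ℝ) = c₃ * Real.log (24 * n / (ε ^ 2 * k))) :
    norm2 ((M ^ t).mulVec x₀ - Px₀) ≤ ε * Real.sqrt k := by
  classical
  set a : Fin n → ℝ := fun j => ∑ u, x₀ u * f j u with ha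
  set R : ℝ := 24 * n / (ε ^ 2 * k) with hR
  set L : ℝ := Real.log R with hL
  have horthc := orth_cols f horth
  -- basic positivity
  have hn0 : (0:ℝ) < n := by exact_mod_cast hk.trans hkn
  have hk0 : (0:ℝ) < k := by exact_mod_cast hk
  have h6 : (0:ℝ) < Real.sqrt 6 := Real.sqrt_pos.mpr (by norm_num)
  have hε2 : ε ^ 2 ≤ 1 := by nlinarith
  have hR24 : (24:ℝ) ≤ R := by
    rw [hR, le_div_iff₀ (by positivity)]
    have hkn' : (k:ℝ) ≤ n := by exact_mod_cast hkn.le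
    nlinarith [mul_nonneg (by linarith : (0:ℝ) ≤ 1 - ε ^ 2) hk0.le]
  have hL0 : 0 < L := Real.log_pos (by linarith)
  have hLne : L ≠ 0 := hL0.ne'
  have hlogc₁ : 0 < Real.log (1 / c₁) := Real.log_pos (by
    rw [lt_div_iff₀ hc₁0]; linarith)
  have hc₃0 : 0 < c₃ := by rw [hc₃]; positivity
  -- eigenvector expansion of x₀
  have hx₀exp : ∀ v, x₀ v = ∑ j, a j * f j v := by
    intro v
    have h1 : ∑ j, a j * f j v = ∑ j, ∑ u, x₀ u * f j u * f j v := by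
      simp_rw [ha, Finset.sum_mul]
    rw [h1, Finset.sum_comm]
    have h2 : ∀ u, ∑ j, x₀ u * f j u * f j v = x₀ u * if u = v then 1 else 0 := by
      intro u
      rw [← horthc u v, Finset.mul_sum]
      refine Finset.sum_congr rfl fun j _ => by ring
    simp_rw [h2]
    simp
  -- action of M^t on eigenvectors
  have heigpow : ∀ (s : ℕ) (j : Fin n), (M ^ s).mulVec (f j) = (γ j ^ s) • f j := by
    intro s j
    induction s with
    | zero => simp
    | succ s ih =>
      rw [pow_succ, ← Matrix.mulVec_mulVec, heig, Matrix.mulVec_smul, ih, smul_smul,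
        ← pow_succ']
  -- expression for x_t
  have hxt : ∀ v, (M ^ t).mulVec x₀ v = ∑ j, (a j * γ j ^ t) * f j v := by
    intro v
    have key : ∀ j, ∑ u, (M ^ t) v u * f j u = γ j ^ t * f j v := by
      intro j
      have := congrFun (heigpow t j) v
      simpa [Matrix.mulVec, dotProduct] using this
    calc (M ^ t).mulVec x₀ v = ∑ u, (M ^ t) v u * x₀ u := by
          simp [Matrix.mulVec, dotProduct]
      _ = ∑ u, ∑ j, a j * ((M ^ t) v u * f j u) := by
          refine Finset.sum_congr rfl fun u _ => ?_
          rw [hx₀exp u, Finset.mul_sum]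
          refine Finset.sum_congr rfl fun j _ => by ring
      _ = ∑ j, ∑ u, a j * ((M ^ t) v u * f j u) := Finset.sum_comm
      _ = ∑ j, (a j * γ j ^ t) * f j v := by
          refine Finset.sum_congr rfl fun j _ => ?_
          rw [← Finset.mul_sum, key j]
          ring
  -- expression for Px₀
  have hPv : ∀ v, Px₀ v = ∑ j : Fin n, (if (j : ℕ) < k then a j else 0) * f j v := by
    intro v
    rw [hP, Finset.sum_apply, Finset.sum_filter]
    refine Finset.sum_congr rfl fun j _ => ?_
    by_cases hj : (j : ℕ) < k <;> simp [hj, ha]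
  -- the coefficient function of the difference
  set c : Fin n → ℝ := fun j => a j * γ j ^ t - (if (j : ℕ) < k then a j else 0) with hc
  have hdiff : ∀ v, ((M ^ t).mulVec x₀ - Px₀) v = ∑ j, c j * f j v := by
    intro v
    rw [Pi.sub_apply, hxt v, hPv v, ← Finset.sum_sub_distrib]
    refine Finset.sum_congr rfl fun j _ => ?_
    simp only [hc]
    ring
  have hdiffsq : ∑ u, ((M ^ t).mulVec x₀ - Px₀) u ^ 2 = ∑ j, c j ^ 2 := by
    simp_rw [hdiff]
    exact norm_expand f horth c
  -- Parseval
  have hS2 : ∑ j, a j ^ 2 = ∑ u, x₀ u ^ 2 := by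
    rw [← norm_expand f horth a]
    refine Finset.sum_congr rfl fun u _ => ?_
    rw [← hx₀exp u]
  have hS1 : ∑ u, Px₀ u ^ 2
      = ∑ j : Fin n, (if (j : ℕ) < k then a j ^ 2 else 0) := by
    have h := norm_expand f horth (fun j => if (j : ℕ) < k then a j else 0)
    calc ∑ u, Px₀ u ^ 2 = ∑ u, (∑ j : Fin n, (if (j : ℕ) < k then a j else 0) * f j u) ^ 2 := by
          refine Finset.sum_congr rfl fun u _ => by rw [hPv u]
      _ = ∑ j : Fin n, (if (j : ℕ) < k then a j else 0) ^ 2 := h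
      _ = ∑ j : Fin n, (if (j : ℕ) < k then a j ^ 2 else 0) := by
          refine Finset.sum_congr rfl fun j _ => by
            by_cases hj : (j : ℕ) < k <;> simp [hj]
  simp only [norm2] at hPx hx
  -- bounds on the sums
  have hS1le : ∑ j : Fin n, (if (j : ℕ) < k then a j ^ 2 else 0) ≤ 6 * k := by
    have h := mul_self_le_mul_self (Real.sqrt_nonneg (∑ u, Px₀ u ^ 2)) hPx
    rw [Real.mul_self_sqrt (by positivity), Real.mul_self_sqrt (by positivity)] at h
    · rw [← hS1]; exact h
  have hS2le : ∑ j, a j ^ 2 ≤ 6 * n := by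
    have h := mul_self_le_mul_self (Real.sqrt_nonneg (∑ u, x₀ u ^ 2)) hx
    rw [Real.mul_self_sqrt (by positivity), Real.mul_self_sqrt (by positivity)] at h
    rw [hS2]; exact h
  -- key scalars
  set γK : ℝ := γ ⟨k - 1, lt_trans (Nat.pred_lt hk.ne') hkn⟩ with hγK
  set A : ℝ := 1 - γK ^ t with hA
  set B : ℝ := c₁ ^ t with hB
  have hγK0 : 0 ≤ γK := hγ0 _
  have hγKle1 : γK ≤ 1 := hγ1 _
  have hA0 : 0 ≤ A := by
    rw [hA]; have := pow_le_one₀ hγK0 hγKle1 (n := t); linarith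
  have hB0 : 0 ≤ B := by rw [hB]; positivity
  -- pointwise bound on the coefficients
  have hcj : ∀ j : Fin n,
      c j ^ 2 ≤ A ^ 2 * (if (j : ℕ) < k then a j ^ 2 else 0) + B ^ 2 * a j ^ 2 := by
    intro j
    by_cases hj : (j : ℕ) < k
    · have hγj : γK ≤ γ j := by
        apply hmono
        rw [Fin.le_def]
        simp only [hγK]
        omega
      have hpow : γK ^ t ≤ γ j ^ t := pow_le_pow_left₀ hγK0 hγj t
      have hpow1 : γ j ^ t ≤ 1 := pow_le_one₀ (hγ0 j) (hγ1 j)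
      have hcval : c j = a j * (γ j ^ t - 1) := by
        simp only [hc, hj, if_true]; ring
      have hsq : (γ j ^ t - 1) ^ 2 ≤ A ^ 2 := by rw [hA]; nlinarith
      rw [hcval, mul_pow]
      simp only [hj, if_true]
      nlinarith [sq_nonneg (a j), sq_nonneg B]
    · have hγj : γ j ≤ γ ⟨k, hkn⟩ := by
        apply hmono
        rw [Fin.le_def]
        simpa using Nat.le_of_not_lt hj
      have hpow : γ j ^ t ≤ c₁ ^ t := pow_le_pow_left₀ (hγ0 j) (hγj.trans hγk1) t
      have hpow0 : 0 ≤ γ j ^ t := pow_nonneg (hγ0 j) t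
      have hcval : c j = a j * γ j ^ t := by simp only [hc, hj, if_false]; ring
      rw [hcval, mul_pow]
      simp only [hj, if_false, mul_zero, zero_add, hB]
      nlinarith [pow_le_pow_left₀ hpow0 hpow 2, sq_nonneg (a j)]
  -- total bound on the sum
  have hsum : ∑ j, c j ^ 2 ≤ A ^ 2 * (6 * k) + B ^ 2 * (6 * n) := by
    calc ∑ j, c j ^ 2
        ≤ ∑ j : Fin n, (A ^ 2 * (if (j : ℕ) < k then a j ^ 2 else 0) + B ^ 2 * a j ^ 2) :=
          Finset.sum_le_sum fun j _ => hcj j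
      _ = A ^ 2 * (∑ j : Fin n, (if (j : ℕ) < k then a j ^ 2 else 0)) + B ^ 2 * ∑ j, a j ^ 2 := by
          rw [Finset.sum_add_distrib, Finset.mul_sum, Finset.mul_sum]
      _ ≤ A ^ 2 * (6 * k) + B ^ 2 * (6 * n) := by
          gcongr <;> first | exact hS1le | exact hS2le
  -- bound A via Bernoulli
  have hAle : A ≤ ε / (2 * Real.sqrt 6) := by
    have hbern : 1 + (t : ℝ) * (γK - 1) ≤ γK ^ t := by
      have h := one_add_mul_le_pow (show (-2:ℝ) ≤ γK - 1 by linarith) t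
      rwa [add_sub_cancel] at h
    have hA' : A ≤ (t : ℝ) * (1 - γK) := by rw [hA]; nlinarith
    have hgap : 1 - γK ≤ c₂ * ε * L⁻¹ := by linarith [hγk]
    have ht0 : (0:ℝ) ≤ (t:ℝ) := Nat.cast_nonneg t
    have hc₂c₃ : c₂ * c₃ = 1 / (2 * Real.sqrt 6) := by
      rw [hc₂]; field_simp
    have hchain : (t : ℝ) * (1 - γK) ≤ (c₃ * L) * (c₂ * ε * L⁻¹) := by
      rw [← ht]
      exact mul_le_mul_of_nonneg_left hgap ht0
    have heq : (c₃ * L) * (c₂ * ε * L⁻¹) = c₂ * c₃ * ε := by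
      field_simp
    rw [heq, hc₂c₃] at hchain
    calc A ≤ (t:ℝ) * (1 - γK) := hA'
      _ ≤ 1 / (2 * Real.sqrt 6) * ε := hchain
      _ = ε / (2 * Real.sqrt 6) := by ring
  -- exact value of B
  have hexpL : Real.exp L = R := Real.exp_log (by positivity)
  have hBval : B = Real.sqrt (R⁻¹) := by
    have h1 : B = Real.exp ((t : ℝ) * Real.log c₁) := by
      rw [hB, Real.exp_nat_mul, Real.exp_log hc₁0]
    have hlogc : Real.log (1 / c₁) = - Real.log c₁ := by
      rw [one_div, Real.log_inv]
    have hlogne : Real.log c₁ ≠ 0 := by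
      rw [hlogc] at hlogc₁; intro h; rw [h] at hlogc₁; simp at hlogc₁
    have h2 : (t : ℝ) * Real.log c₁ = - (L / 2) := by
      rw [ht, hc₃, hlogc]
      field_simp
    rw [h1, h2, show -(L/2) = (-L)/2 by ring, Real.exp_half, Real.exp_neg, hexpL]
  -- final computation
  have hnorm : norm2 ((M ^ t).mulVec x₀ - Px₀) = Real.sqrt (∑ j, c j ^ 2) := by
    rw [norm2, hdiffsq]
  rw [hnorm]
  have hsqrt1 : Real.sqrt (∑ j, c j ^ 2)
      ≤ Real.sqrt (A ^ 2 * (6 * k)) + Real.sqrt (B ^ 2 * (6 * n)) := by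
    calc Real.sqrt (∑ j, c j ^ 2) ≤ Real.sqrt (A ^ 2 * (6 * k) + B ^ 2 * (6 * n)) :=
          Real.sqrt_le_sqrt hsum
      _ ≤ _ := sqrt_add_le_aux _ _ (by positivity) (by positivity)
  have hterm1 : Real.sqrt (A ^ 2 * (6 * k)) ≤ ε * Real.sqrt k / 2 := by
    rw [Real.sqrt_mul (sq_nonneg A), Real.sqrt_sq hA0,
      Real.sqrt_mul (by norm_num : (0:ℝ) ≤ 6)]
    calc A * (Real.sqrt 6 * Real.sqrt k)
        ≤ (ε / (2 * Real.sqrt 6)) * (Real.sqrt 6 * Real.sqrt k) :=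
          mul_le_mul_of_nonneg_right hAle (by positivity)
      _ = ε * Real.sqrt k / 2 := by field_simp
  have hterm2 : Real.sqrt (B ^ 2 * (6 * n)) = ε * Real.sqrt k / 2 := by
    rw [Real.sqrt_mul (sq_nonneg B), Real.sqrt_sq hB0, hBval,
      ← Real.sqrt_mul (by positivity)]
    have harg : R⁻¹ * (6 * n) = ε ^ 2 * k / 4 := by
      rw [hR]
      field_simp
      ring
    rw [harg, show ε ^ 2 * k / 4 = (ε * Real.sqrt k / 2) ^ 2 by
      rw [div_pow, mul_pow, Real.sq_sqrt hk0.le]; norm_num]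
    exact Real.sqrt_sq (by positivity)
  calc Real.sqrt (∑ j, c j ^ 2) ≤ _ := hsqrt1
    _ ≤ ε * Real.sqrt k / 2 + ε * Real.sqrt k / 2 := by
        rw [hterm2]; linarith [hterm1]
    _ = ε * Real.sqrt k := by ring
end

section
/- Let M be a symmetric matrix with eigenvalues 1 ≥ γ₁ ≥ … ≥ γₙ ≥ 0 and orthonormal eigenvectors f₁,…,fₙ, and let P = Σ_{j=1}^k fⱼfⱼᵀ. For any x₀ ∈ ℝⁿ and any t ≥ 0, ‖Mᵗx₀ − Px₀‖₂ ≤ (1 − γ_kᵗ)·‖Px₀‖₂ + γ_{k+1}ᵗ·‖x₀‖₂. -/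
open Matrix Finset

/-- Power-method error decomposition: for a symmetric `M` with orthonormal
eigenvectors `f₁, …, fₙ` and eigenvalues `1 ≥ γ₁ ≥ … ≥ γₙ ≥ 0`, and
`P = ∑_{j ≤ k} fⱼ fⱼᵀ`, we have
`‖Mᵗ x₀ − P x₀‖₂ ≤ (1 − γ_kᵗ) ‖P x₀‖₂ + γ_{k+1}ᵗ ‖x₀‖₂`. -/
theorem stmt_3 {n : ℕ} (M : Matrix (Fin n) (Fin n) ℝ) (hM : M.IsSymm)
    (γ : Fin n → ℝ) (f : Fin n → (Fin n → ℝ))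
    (heig : ∀ j, M.mulVec (f j) = γ j • f j)
    (horth : ∀ i j : Fin n, ∑ u, f i u * f j u = if i = j then 1 else 0)
    (hmono : ∀ i j : Fin n, i ≤ j → γ j ≤ γ i)
    (hγ1 : ∀ j, γ j ≤ 1) (hγ0 : ∀ j, 0 ≤ γ j)
    (k : ℕ) (hk : 0 < k) (hkn : k < n)
    (x₀ : Fin n → ℝ) (Px₀ : Fin n → ℝ)
    (hP : Px₀ = ∑ j ∈ univ.filter (fun j : Fin n => (j : ℕ) < k),
      (∑ u, x₀ u * f j u) • f j)
    (t : ℕ) :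
    norm2 ((M ^ t).mulVec x₀ - Px₀) ≤
      (1 - γ ⟨k - 1, lt_trans (Nat.pred_lt hk.ne') hkn⟩ ^ t) * norm2 Px₀ +
        γ ⟨k, hkn⟩ ^ t * norm2 x₀ := by
  classical
  set a : Fin n → ℝ := fun j => ∑ u, x₀ u * f j u with ha
  -- column orthonormality
  have horth' : ∀ u v : Fin n, ∑ j, f j u * f j v = if u = v then 1 else 0 := by
    have hF : (Matrix.of fun i j => f i j) * (Matrix.of fun i j => f i j)ᵀ = 1 := by
      ext i j
      simp [Matrix.mul_apply, Matrix.one_apply, horth i j]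
    have hF' := mul_eq_one_comm.mp hF
    intro u v
    have h2 := congrFun (congrFun hF' u) v
    simpa [Matrix.mul_apply, Matrix.one_apply] using h2
  -- Parseval
  have parseval : ∀ c : Fin n → ℝ, ∑ u, (∑ j, c j * f j u) ^ 2 = ∑ j, c j ^ 2 := by
    intro c
    have key : ∑ u, (∑ j, c j * f j u) ^ 2
        = ∑ j, ∑ i, (c j * c i) * ∑ u, f j u * f i u := by
      simp_rw [sq, Finset.sum_mul_sum]
      rw [Finset.sum_comm]
      refine Finset.sum_congr rfl fun j _ => ?_
      rw [Finset.sum_comm]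
      refine Finset.sum_congr rfl fun i _ => ?_
      rw [Finset.mul_sum]
      exact Finset.sum_congr rfl fun u _ => by ring
    rw [key]
    simp [horth, mul_ite, Finset.sum_ite_eq, sq]
  -- eigenvalue powers
  have hpow : ∀ (s : ℕ) (j : Fin n), (M ^ s).mulVec (f j) = (γ j ^ s) • f j := by
    intro s j
    induction s with
    | zero => simp
    | succ s ih =>
      rw [pow_succ, ← Matrix.mulVec_mulVec, heig, Matrix.mulVec_smul, ih,
        smul_smul, pow_succ, mul_comm]
  -- expansion of x₀
  have hx' : x₀ = ∑ j, a j • f j := by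
    funext u
    have : x₀ u = ∑ v, (∑ j, f j u * f j v) * x₀ v := by
      simp_rw [horth']
      simp
    rw [this]
    rw [Finset.sum_apply]
    simp_rw [Finset.sum_mul, Pi.smul_apply, smul_eq_mul, ha, Finset.sum_mul]
    rw [Finset.sum_comm]
    refine Finset.sum_congr rfl fun j _ => Finset.sum_congr rfl fun v _ => by ring
  -- expansion of M^t x₀
  have hMt : (M ^ t).mulVec x₀ = ∑ j, (a j * γ j ^ t) • f j := by
    conv_lhs => rw [hx']
    have hsum := map_sum (Matrix.mulVecLin (M ^ t)) (fun j => a j • f j) Finset.univ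
    simp only [Matrix.mulVecLin_apply] at hsum
    rw [hsum]
    refine Finset.sum_congr rfl fun j _ => ?_
    rw [Matrix.mulVec_smul, hpow t j, smul_smul]
  -- expansion of Px₀
  have hPx : Px₀ = ∑ j : Fin n, (if (j : ℕ) < k then a j else 0) • f j := by
    rw [hP, Finset.sum_filter]
    refine Finset.sum_congr rfl fun j _ => ?_
    split <;> simp [ha]
  -- coefficients of the difference
  set c : Fin n → ℝ := fun j => a j * γ j ^ t - (if (j : ℕ) < k then a j else 0) with hc
  have hd : ∀ u, ((M ^ t).mulVec x₀ - Px₀) u = ∑ j, c j * f j u := by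
    intro u
    rw [Pi.sub_apply, hMt, hPx, Finset.sum_apply, Finset.sum_apply,
      ← Finset.sum_sub_distrib]
    refine Finset.sum_congr rfl fun j _ => ?_
    simp [hc, sub_mul]
  set α : ℝ := 1 - γ ⟨k - 1, lt_trans (Nat.pred_lt hk.ne') hkn⟩ ^ t with hα
  set β : ℝ := γ ⟨k, hkn⟩ ^ t with hβ
  have hα0 : 0 ≤ α := by
    have := pow_le_one₀ (hγ0 _) (hγ1 ⟨k - 1, lt_trans (Nat.pred_lt hk.ne') hkn⟩) (n := t)
    simp [hα]; linarith
  have hβ0 : 0 ≤ β := pow_nonneg (hγ0 _) t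
  set S₁ : ℝ := ∑ j ∈ univ.filter (fun j : Fin n => (j : ℕ) < k), a j ^ 2 with hS₁
  set S : ℝ := ∑ j, a j ^ 2 with hS
  have hS₁0 : 0 ≤ S₁ := Finset.sum_nonneg fun j _ => sq_nonneg _
  have hS0 : 0 ≤ S := Finset.sum_nonneg fun j _ => sq_nonneg _
  -- norms in terms of coefficients
  have hnPx : norm2 Px₀ = Real.sqrt S₁ := by
    have : ∀ u, Px₀ u = ∑ j : Fin n, (if (j : ℕ) < k then a j else 0) * f j u := by
      intro u
      rw [hPx, Finset.sum_apply]
      simp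
    unfold norm2
    simp_rw [this]
    rw [parseval]
    congr 1
    rw [hS₁, Finset.sum_filter]
    refine Finset.sum_congr rfl fun j _ => ?_
    split <;> simp
  have hnx : norm2 x₀ = Real.sqrt S := by
    have : ∀ u, x₀ u = ∑ j, a j * f j u := by
      intro u
      rw [hx', Finset.sum_apply]
      simp
    unfold norm2
    simp_rw [this]
    rw [parseval]
  have hnd : norm2 ((M ^ t).mulVec x₀ - Px₀) = Real.sqrt (∑ j, c j ^ 2) := by
    unfold norm2
    simp_rw [hd]
    rw [parseval]
  -- key bound on coefficients
  have hkey : ∑ j, c j ^ 2 ≤ α ^ 2 * S₁ + β ^ 2 * S := by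
    rw [← Finset.sum_filter_add_sum_filter_not univ (fun j : Fin n => (j : ℕ) < k)
      (fun j => c j ^ 2)]
    have h1 : ∑ j ∈ univ.filter (fun j : Fin n => (j : ℕ) < k), c j ^ 2 ≤ α ^ 2 * S₁ := by
      rw [hS₁, Finset.mul_sum]
      refine Finset.sum_le_sum fun j hj => ?_
      rw [Finset.mem_filter] at hj
      have hjk : (j : ℕ) < k := hj.2
      have hcj : c j = a j * (γ j ^ t - 1) := by
        simp [hc, hjk]; ring
      have hle : γ ⟨k - 1, lt_trans (Nat.pred_lt hk.ne') hkn⟩ ≤ γ j := by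
        apply hmono
        rw [Fin.le_def]
        exact Nat.le_pred_of_lt hjk
      have hle' : γ ⟨k - 1, lt_trans (Nat.pred_lt hk.ne') hkn⟩ ^ t ≤ γ j ^ t :=
        pow_le_pow_left₀ (hγ0 _) hle t
      have h0 : γ j ^ t ≤ 1 := pow_le_one₀ (hγ0 j) (hγ1 j)
      have h1 : 0 ≤ 1 - γ j ^ t := by linarith
      have h2 : 1 - γ j ^ t ≤ α := by rw [hα]; linarith
      rw [hcj]
      calc (a j * (γ j ^ t - 1)) ^ 2 = (1 - γ j ^ t) ^ 2 * a j ^ 2 := by ring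
        _ ≤ α ^ 2 * a j ^ 2 := by
            apply mul_le_mul_of_nonneg_right _ (sq_nonneg _)
            exact pow_le_pow_left₀ h1 h2 2
    have h2 : ∑ j ∈ univ.filter (fun j : Fin n => ¬ (j : ℕ) < k), c j ^ 2 ≤ β ^ 2 * S := by
      have step1 : ∑ j ∈ univ.filter (fun j : Fin n => ¬ (j : ℕ) < k), c j ^ 2
          ≤ ∑ j ∈ univ.filter (fun j : Fin n => ¬ (j : ℕ) < k), β ^ 2 * a j ^ 2 := by
        refine Finset.sum_le_sum fun j hj => ?_
        rw [Finset.mem_filter] at hj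
        have hjk : ¬ (j : ℕ) < k := hj.2
        have hcj : c j = a j * γ j ^ t := by simp [hc, hjk]
        have hle : γ j ≤ γ ⟨k, hkn⟩ := by
          apply hmono
          rw [Fin.le_def]
          exact Nat.le_of_not_lt hjk
        have hle' : γ j ^ t ≤ β := pow_le_pow_left₀ (hγ0 _) hle t
        have h0 : 0 ≤ γ j ^ t := pow_nonneg (hγ0 j) t
        rw [hcj]
        calc (a j * γ j ^ t) ^ 2 = (γ j ^ t) ^ 2 * a j ^ 2 := by ring
          _ ≤ β ^ 2 * a j ^ 2 := by
              apply mul_le_mul_of_nonneg_right _ (sq_nonneg _)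
              exact pow_le_pow_left₀ h0 hle' 2
      refine step1.trans ?_
      rw [← Finset.mul_sum]
      apply mul_le_mul_of_nonneg_left _ (sq_nonneg β)
      rw [hS]
      exact Finset.sum_le_sum_of_subset_of_nonneg (Finset.filter_subset _ _)
        (fun j _ _ => sq_nonneg _)
    linarith
  -- assemble
  rw [hnd, hnPx, hnx]
  have step1 : Real.sqrt (∑ j, c j ^ 2) ≤ Real.sqrt (α ^ 2 * S₁ + β ^ 2 * S) :=
    Real.sqrt_le_sqrt hkey
  have hA : (0:ℝ) ≤ α ^ 2 * S₁ := mul_nonneg (sq_nonneg _) hS₁0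
  have hB : (0:ℝ) ≤ β ^ 2 * S := mul_nonneg (sq_nonneg _) hS0
  have step2 : Real.sqrt (α ^ 2 * S₁ + β ^ 2 * S)
      ≤ Real.sqrt (α ^ 2 * S₁) + Real.sqrt (β ^ 2 * S) := by
    rw [← Real.sqrt_sq (by positivity : (0:ℝ) ≤ Real.sqrt (α ^ 2 * S₁) + Real.sqrt (β ^ 2 * S))]
    apply Real.sqrt_le_sqrt
    have e1 := Real.sq_sqrt hA
    have e2 := Real.sq_sqrt hB
    nlinarith [Real.sqrt_nonneg (α ^ 2 * S₁), Real.sqrt_nonneg (β ^ 2 * S)]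
  have e3 : Real.sqrt (α ^ 2 * S₁) = α * Real.sqrt S₁ := by
    rw [Real.sqrt_mul (sq_nonneg α), Real.sqrt_sq hα0]
  have e4 : Real.sqrt (β ^ 2 * S) = β * Real.sqrt S := by
    rw [Real.sqrt_mul (sq_nonneg β), Real.sqrt_sq hβ0]
  calc Real.sqrt (∑ j, c j ^ 2) ≤ Real.sqrt (α ^ 2 * S₁) + Real.sqrt (β ^ 2 * S) :=
        step1.trans step2
    _ = α * Real.sqrt S₁ + β * Real.sqrt S := by rw [e3, e4]
end

section
/- Let Y = [y₁;…;y_l] and Z = [z₁;…;z_l] be n×l matrices with ‖yᵢ − zᵢ‖₂ ≤ ε√k for each i and l ≤ k, and let D be a diagonal matrix with entries ≥ 1. Then for every k-way partition {A₁,…,A_k} of {1,…,n}, |√(COST_{D^{-1/2}Y}(A₁,…,A_k)) − √(COST_{D^{-1/2}Z}(A₁,…,A_k))| ≤ εk, where COST_B(A₁,…,A_k) = ‖(I − XXᵀ)B‖_F² and X is the normalized indicator matrix of the partition. -/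
open Matrix Finset

/-- `COST_B(A₁,…,A_k) = ‖(I − XXᵀ)B‖_F²` where `X` is the normalized indicator
matrix of the partition. -/
noncomputable def projCost {n l k : ℕ} (A : Fin k → Finset (Fin n))
    (B : Matrix (Fin n) (Fin l) ℝ) : ℝ :=
  ∑ u, ∑ j, (((1 - Matrix.of (fun u i : Fin n => ∑ i' : Fin k,
      (if u ∈ A i' then 1 / Real.sqrt ((A i').card) else 0) *
      (if i ∈ A i' then 1 / Real.sqrt ((A i').card) else 0))) * B :
    Matrix (Fin n) (Fin l) ℝ) u j) ^ 2

/-- View a matrix as an element of Euclidean space (Frobenius norm). -/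
noncomputable def toE {n l : ℕ} (B : Matrix (Fin n) (Fin l) ℝ) :
    EuclideanSpace ℝ (Fin n × Fin l) := WithLp.toLp 2 (fun p : Fin n × Fin l => B p.1 p.2)

lemma norm_toE {n l : ℕ} (B : Matrix (Fin n) (Fin l) ℝ) :
    ‖toE B‖ = Real.sqrt (∑ u, ∑ j, (B u j) ^ 2) := by
  rw [EuclideanSpace.norm_eq]
  congr 1
  rw [Fintype.sum_prod_type]
  simp [toE, sq_abs]

lemma toE_sub {n l : ℕ} (B C : Matrix (Fin n) (Fin l) ℝ) :
    toE B - toE C = toE (B - C) := by ext p; simp [toE]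

lemma toE_add {n l : ℕ} (B C : Matrix (Fin n) (Fin l) ℝ) :
    toE B + toE C = toE (B + C) := by ext p; simp [toE]

lemma inner_toE {n l : ℕ} (B C : Matrix (Fin n) (Fin l) ℝ) :
    (inner ℝ (toE B) (toE C) : ℝ) = Matrix.trace (Bᵀ * C) := by
  rw [PiLp.inner_apply]
  rw [Fintype.sum_prod_type]
  rw [Matrix.trace]
  rw [Finset.sum_comm]
  simp [Matrix.mul_apply, toE, Matrix.diag, mul_comm]

/-- If the columns of `Y, Z ∈ ℝⁿˣˡ` satisfy `‖yᵢ − zᵢ‖₂ ≤ ε√k`, with `l ≤ k`,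
and `D` is diagonal with entries `≥ 1`, then for every k-way partition
`{A₁,…,A_k}` of `{1,…,n}`,
`|√COST_{D^{-1/2}Y}(A) − √COST_{D^{-1/2}Z}(A)| ≤ ε k`. -/
theorem stmt_15 (n l k : ℕ) (hlk : l ≤ k) (ε : ℝ) (hε : 0 ≤ ε)
    (Y Z : Matrix (Fin n) (Fin l) ℝ)
    (hYZ : ∀ i, Real.sqrt (∑ u, (Y u i - Z u i) ^ 2) ≤ ε * Real.sqrt k)
    (d : Fin n → ℝ) (hd : ∀ i, 1 ≤ d i)
    (Dinv : Matrix (Fin n) (Fin n) ℝ)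
    (hD : Dinv = Matrix.diagonal fun i => (Real.sqrt (d i))⁻¹)
    (A : Fin k → Finset (Fin n))
    (hdisj : ∀ i j, i ≠ j → Disjoint (A i) (A j))
    (hcover : ∀ u : Fin n, ∃ i, u ∈ A i)
    (hne : ∀ i, (A i).Nonempty) :
    |Real.sqrt (projCost A (Dinv * Y)) - Real.sqrt (projCost A (Dinv * Z))| ≤
      ε * k := by
  classical
  set x : Fin k → Fin n → ℝ :=
    fun i u => if u ∈ A i then 1 / Real.sqrt ((A i).card) else 0 with hx
  set M : Matrix (Fin n) (Fin n) ℝ :=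
    Matrix.of (fun u v : Fin n => ∑ i : Fin k, x i u * x i v) with hM
  -- orthonormality of the indicator vectors
  have horth : ∀ i j : Fin k, ∑ w, x i w * x j w = if i = j then 1 else 0 := by
    intro i j
    by_cases hij : i = j
    · subst hij
      rw [if_pos rfl]
      have hc : (0 : ℝ) < (A i).card := by
        exact_mod_cast Finset.card_pos.mpr (hne i)
      have : ∀ w, x i w * x i w = if w ∈ A i then 1 / ((A i).card : ℝ) else 0 := by
        intro w
        by_cases hw : w ∈ A i
        · simp only [hx, if_pos hw]
          rw [div_mul_div_comm, one_mul]
          rw [Real.mul_self_sqrt hc.le]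
        · simp [hx, hw]
      rw [Finset.sum_congr rfl fun w _ => this w]
      rw [Finset.sum_ite_mem, Finset.univ_inter, Finset.sum_const]
      rw [nsmul_eq_mul]; field_simp
    · rw [if_neg hij]
      apply Finset.sum_eq_zero
      intro w _
      by_cases hw : w ∈ A i
      · have hw' : w ∉ A j := Finset.disjoint_left.mp (hdisj i j hij) hw
        simp [hx, hw']
      · simp [hx, hw]
  -- M is symmetric and idempotent
  have hMsymm : Mᵀ = M := by
    ext u v
    simp only [Matrix.transpose_apply, hM, Matrix.of_apply]
    exact Finset.sum_congr rfl fun i _ => mul_comm _ _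
  have hMM : M * M = M := by
    ext u v
    simp only [Matrix.mul_apply, hM, Matrix.of_apply]
    calc ∑ w, (∑ i, x i u * x i w) * (∑ j, x j w * x j v)
        = ∑ w, ∑ i, ∑ j, (x i u * x j v) * (x i w * x j w) := by
          refine Finset.sum_congr rfl fun w _ => ?_
          rw [Finset.sum_mul]
          refine Finset.sum_congr rfl fun i _ => ?_
          rw [Finset.mul_sum]
          exact Finset.sum_congr rfl fun j _ => by ring
      _ = ∑ i, ∑ j, (x i u * x j v) * ∑ w, x i w * x j w := by
          rw [Finset.sum_comm]
          refine Finset.sum_congr rfl fun i _ => ?_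
          rw [Finset.sum_comm]
          exact Finset.sum_congr rfl fun j _ => (Finset.mul_sum _ _ _).symm
      _ = ∑ i, x i u * x i v := by
          refine Finset.sum_congr rfl fun i _ => ?_
          rw [Finset.sum_congr rfl fun j (_ : j ∈ Finset.univ) => by rw [horth i j]]
          simp
  -- projection contraction
  have hproj : ∀ W : Matrix (Fin n) (Fin l) ℝ,
      ‖toE ((1 - M) * W)‖ ≤ ‖toE W‖ := by
    intro W
    have hzero : (inner ℝ (toE ((1 - M) * W)) (toE (M * W)) : ℝ) = 0 := by
      rw [inner_toE]
      have : ((1 - M) * W)ᵀ * (M * W) = Wᵀ * (((1 - M)ᵀ * M) * W) := by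
        rw [Matrix.transpose_mul, Matrix.mul_assoc,
          ← Matrix.mul_assoc ((1 - M)ᵀ) M W]
      rw [this]
      have h1 : (1 - M)ᵀ * M = 0 := by
        rw [Matrix.transpose_sub, Matrix.transpose_one, hMsymm, Matrix.sub_mul,
          Matrix.one_mul, hMM, sub_self]
      rw [h1, Matrix.zero_mul, Matrix.mul_zero, Matrix.trace_zero]
    have hsum : toE ((1 - M) * W) + toE (M * W) = toE W := by
      have : (1 - M) * W + M * W = W := by
        rw [Matrix.sub_mul, Matrix.one_mul, sub_add_cancel]
      rw [toE_add, this]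
    have hpyth := norm_add_sq_real (toE ((1 - M) * W)) (toE (M * W))
    rw [hsum, hzero] at hpyth
    have h2 : ‖toE ((1 - M) * W)‖ ^ 2 ≤ ‖toE W‖ ^ 2 := by
      rw [hpyth]; nlinarith [sq_nonneg ‖toE (M * W)‖, norm_nonneg (toE ((1 - M) * W))]
    exact (pow_le_pow_iff_left₀ (norm_nonneg _) (norm_nonneg _) two_ne_zero).mp h2
  -- diagonal contraction
  have hdiag : ∀ W : Matrix (Fin n) (Fin l) ℝ,
      ‖toE (Dinv * W)‖ ≤ ‖toE W‖ := by
    intro W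
    rw [norm_toE, norm_toE]
    apply Real.sqrt_le_sqrt
    apply Finset.sum_le_sum
    intro u _
    apply Finset.sum_le_sum
    intro j _
    rw [hD, Matrix.diagonal_mul]
    have h1 : Real.sqrt (d u) ≥ 1 := by
      have := Real.sqrt_le_sqrt (hd u)
      simpa using this
    have h2 : |(Real.sqrt (d u))⁻¹| ≤ 1 := by
      rw [abs_of_nonneg (by positivity)]
      exact inv_le_one_of_one_le₀ h1
    calc ((Real.sqrt (d u))⁻¹ * W u j) ^ 2
        = ((Real.sqrt (d u))⁻¹) ^ 2 * (W u j) ^ 2 := by ring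
      _ ≤ 1 * (W u j) ^ 2 := by
          apply mul_le_mul_of_nonneg_right _ (sq_nonneg _)
          calc ((Real.sqrt (d u))⁻¹) ^ 2 = |(Real.sqrt (d u))⁻¹| ^ 2 := (sq_abs _).symm
            _ ≤ 1 ^ 2 := pow_le_pow_left₀ (abs_nonneg _) h2 2
            _ = 1 := one_pow 2
      _ = (W u j) ^ 2 := one_mul _
  -- rewriting the cost via norms
  have hcost : ∀ B : Matrix (Fin n) (Fin l) ℝ,
      Real.sqrt (projCost A B) = ‖toE ((1 - M) * B)‖ := by
    intro B
    rw [norm_toE]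
    rfl
  rw [hcost, hcost]
  have habs := abs_norm_sub_norm_le (toE ((1 - M) * (Dinv * Y)))
    (toE ((1 - M) * (Dinv * Z)))
  rw [toE_sub] at habs
  have hsubeq : (1 - M) * (Dinv * Y) - (1 - M) * (Dinv * Z)
      = (1 - M) * (Dinv * (Y - Z)) := by
    rw [Matrix.mul_sub, Matrix.mul_sub]
  rw [hsubeq] at habs
  refine habs.trans ?_
  refine (hproj _).trans ?_
  refine (hdiag _).trans ?_
  -- final bound on ‖Y - Z‖_F
  rw [norm_toE]
  have hk0 : (0 : ℝ) ≤ (k : ℝ) := Nat.cast_nonneg k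
  have hbound : ∑ u, ∑ j, ((Y - Z) u j) ^ 2 ≤ (ε * k) ^ 2 := by
    rw [Finset.sum_comm]
    have hcol : ∀ j : Fin l, ∑ u, ((Y - Z) u j) ^ 2 ≤ ε ^ 2 * k := by
      intro j
      have hs : (0 : ℝ) ≤ ∑ u, (Y u j - Z u j) ^ 2 :=
        Finset.sum_nonneg fun u _ => sq_nonneg _
      have := hYZ j
      have hsq : ∑ u, (Y u j - Z u j) ^ 2 ≤ (ε * Real.sqrt k) ^ 2 := by
        have h1 : Real.sqrt (∑ u, (Y u j - Z u j) ^ 2) ^ 2 ≤ (ε * Real.sqrt k) ^ 2 :=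
          pow_le_pow_left₀ (Real.sqrt_nonneg _) this 2
        rwa [Real.sq_sqrt hs] at h1
      calc ∑ u, ((Y - Z) u j) ^ 2 = ∑ u, (Y u j - Z u j) ^ 2 := by
            refine Finset.sum_congr rfl fun u _ => ?_
            rw [Matrix.sub_apply]
        _ ≤ (ε * Real.sqrt k) ^ 2 := hsq
        _ = ε ^ 2 * k := by rw [mul_pow, Real.sq_sqrt hk0]
    calc ∑ j, ∑ u, ((Y - Z) u j) ^ 2 ≤ ∑ _j : Fin l, ε ^ 2 * k :=
          Finset.sum_le_sum fun j _ => hcol j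
      _ = l * (ε ^ 2 * k) := by rw [Finset.sum_const]; simp [mul_comm]
      _ ≤ k * (ε ^ 2 * k) := by
          apply mul_le_mul_of_nonneg_right _ (by positivity)
          exact_mod_cast hlk
      _ = (ε * k) ^ 2 := by ring
  calc Real.sqrt (∑ u, ∑ j, ((Y - Z) u j) ^ 2)
      ≤ Real.sqrt ((ε * k) ^ 2) := Real.sqrt_le_sqrt hbound
    _ = ε * k := Real.sqrt_sq (by positivity)
end
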